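/- arXiv:1401.0424 — 7 statements merged into one kernel-verified Lean document; each statement's English description precedes it below -/
import Mathlib

section
/- Let k ∈ ℕ and let G be a k-connected graph. Suppose A ⊆ V(G) with |A| ≥ k and |V(G)\A| ≥ k. Then there is a matching of size k in G between A and V(G)\A. -/
/-!
Match every vertex `a` either to a neighbour across the cut `(A, Aᶜ)` (none if `a ∉ A`) or to
one of `|V| - k` dummy vertices. Hall's condition for this holds: a set `T ⊆ A` violating it
would make `N(T) ∪ (A \ T)` a set of fewer than `k` vertices separating `T` from `Aᶜ \ N(T)`.
At most `|V| - k` vertices then use a dummy, so at least `k` are matched across the cut.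
-/

open Finset

theorem Finset.exists_injOn_of_all_card_le_biUnion_card_add {ι α : Type*} [Fintype ι]
    [DecidableEq α] [Nonempty α] (t : ι → Finset α) (d : ℕ)
    (h : ∀ s : Finset ι, #s ≤ #(s.biUnion t) + d) :
    ∃ s : Finset ι, Fintype.card ι ≤ #s + d ∧
      ∃ f : ι → α, Set.InjOn f s ∧ ∀ x ∈ s, f x ∈ t x := by
  let t' : ι → Finset (α ⊕ Fin d) := fun x => (t x).disjSum univ
  have hall : ∀ s : Finset ι, #s ≤ #(s.biUnion t') := by
    intro s
    obtain rfl | ⟨x₀, hx₀⟩ := s.eq_empty_or_nonempty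
    · simp
    have hsub : (s.biUnion t).disjSum univ ⊆ s.biUnion t' := by
      intro z hz
      rcases z with b | j
      · obtain ⟨x, hx, hb⟩ := mem_biUnion.mp (inl_mem_disjSum.mp hz)
        exact mem_biUnion.mpr ⟨x, hx, inl_mem_disjSum.mpr hb⟩
      · exact mem_biUnion.mpr ⟨x₀, hx₀, inr_mem_disjSum.mpr (mem_univ j)⟩
    calc #s ≤ #(s.biUnion t) + d := h s
      _ = #((s.biUnion t).disjSum univ) := by simp
      _ ≤ #(s.biUnion t') := card_le_card hsub
  obtain ⟨g, hg, hgt⟩ := (all_card_le_biUnion_card_iff_exists_injective t').mp hall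
  let f : ι → α := fun x => (g x).elim id fun _ => Classical.arbitrary α
  set s : Finset ι := univ.filter fun x => (g x).isLeft
  have hgf : ∀ x ∈ s, g x = .inl (f x) := by
    intro x hx
    obtain ⟨b, hb⟩ := Sum.isLeft_iff.mp (mem_filter.mp hx).2
    simp [f, hb]
  have hright : #(univ.filter fun x => ¬(g x).isLeft) ≤ d := by
    calc _ ≤ #((∅ : Finset α).disjSum (univ : Finset (Fin d))) := by
          refine card_le_card_of_injOn g (fun x hx => ?_) hg.injOn
          obtain ⟨j, hj⟩ := Sum.isRight_iff.mp (Sum.not_isLeft.mp (mem_filter.mp hx).2)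
          simp [hj]
      _ = d := by simp
  refine ⟨s, ?_, f, fun x hx y hy hxy => hg ?_, fun x hx => ?_⟩
  · have : #s + #(univ.filter fun x => ¬(g x).isLeft) = Fintype.card ι :=
      (card_filter_add_card_filter_not _).trans card_univ
    omega
  · rw [hgf x hx, hgf y hy, hxy]
  · simpa [t', hgf x hx] using hgt x

theorem SimpleGraph.Preconnected.exists_adj_mem_notMem {V : Type*} {H : SimpleGraph V}
    (hH : H.Preconnected) {S : Set V} {u v : V} (hu : u ∈ S) (hv : v ∉ S) :
    ∃ x y, H.Adj x y ∧ x ∈ S ∧ y ∉ S := by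
  obtain ⟨p⟩ := hH u v
  obtain ⟨e, -, he⟩ := p.exists_boundary_dart S hu hv
  exact ⟨e.fst, e.snd, e.adj, he⟩

namespace SimpleGraph

variable {V : Type*} [Fintype V] [DecidableEq V] (G : SimpleGraph V) (A : Finset V)

open Classical in
noncomputable def crossNeighbors (a : V) : Finset V :=
  {b | a ∈ A ∧ b ∉ A ∧ G.Adj a b}

variable {G A}

@[simp]
theorem mem_crossNeighbors {a b : V} :
    b ∈ G.crossNeighbors A a ↔ a ∈ A ∧ b ∉ A ∧ G.Adj a b := by
  simp [crossNeighbors]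

theorem le_card_biUnion_crossNeighbors_add {k : ℕ}
    (hconn : ∀ S : Finset V, S.card < k → (G.induce ((↑S : Set V)ᶜ)).Connected)
    {T : Finset V} (hTA : T ⊆ A) (hT : T.Nonempty)
    (hN : ¬Aᶜ ⊆ T.biUnion (G.crossNeighbors A)) :
    k ≤ #(T.biUnion (G.crossNeighbors A)) + #(A \ T) := by
  set N := T.biUnion (G.crossNeighbors A)
  by_contra! hsmall
  set C := N ∪ (A \ T)
  have hNA : ∀ y ∈ N, y ∉ A := fun y hy => by
    obtain ⟨x, -, hxy⟩ := mem_biUnion.mp hy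
    exact (mem_crossNeighbors.mp hxy).2.1
  obtain ⟨a, haT⟩ := hT
  obtain ⟨b, hbA, hbN⟩ := not_subset.mp hN
  have haC : a ∉ C := by
    simp only [C, mem_union, mem_sdiff, not_or, not_and, not_not]
    exact ⟨fun h => hNA a h (hTA haT), fun _ => haT⟩
  have hbC : b ∉ C := by
    simp only [C, mem_union, mem_sdiff, not_or]
    exact ⟨hbN, fun h => mem_compl.mp hbA h.1⟩
  have hconnC := hconn C ((card_union_le _ _).trans_lt hsmall)
  obtain ⟨x, y, hxy, hxA, hyA⟩ := hconnC.preconnected.exists_adj_mem_notMem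
    (S := {x | x.1 ∈ A}) (u := ⟨a, haC⟩) (v := ⟨b, hbC⟩) (hTA haT) (by simpa using hbA)
  have hxT : x.1 ∈ T := by
    by_contra hxT
    exact x.2 (mem_union_right _ (mem_sdiff.mpr ⟨hxA, hxT⟩))
  have hyN : y.1 ∈ N := mem_biUnion.mpr ⟨x, hxT, mem_crossNeighbors.mpr ⟨hxA, hyA, hxy⟩⟩
  exact y.2 (mem_union_left _ hyN)

theorem card_le_card_biUnion_crossNeighbors_add {k : ℕ}
    (hconn : ∀ S : Finset V, S.card < k → (G.induce ((↑S : Set V)ᶜ)).Connected)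
    (hA : k ≤ A.card) (hAc : k ≤ Aᶜ.card) (s : Finset V) :
    #s ≤ #(s.biUnion (G.crossNeighbors A)) + (Fintype.card V - k) := by
  have hsT : #s ≤ #(s ∩ A) + #Aᶜ := by
    rw [← card_inter_add_card_sdiff s A]
    exact Nat.add_le_add_left (card_le_card fun x hx => by simp_all) _
  have hVA := card_add_card_compl A
  have hTs : (s ∩ A).biUnion (G.crossNeighbors A) ⊆ s.biUnion (G.crossNeighbors A) :=
    biUnion_subset_biUnion_of_subset_left _ inter_subset_left
  obtain hT | hT := (s ∩ A).eq_empty_or_nonempty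
  · rw [hT, card_empty] at hsT
    omega
  by_cases hN : Aᶜ ⊆ (s ∩ A).biUnion (G.crossNeighbors A)
  · have := card_le_card (hN.trans hTs)
    have := card_le_univ s
    omega
  · have hcut := le_card_biUnion_crossNeighbors_add hconn inter_subset_right hT hN
    rw [card_sdiff_of_subset inter_subset_right] at hcut
    have := card_le_card hTs
    have := card_le_card (inter_subset_right : s ∩ A ⊆ A)
    omega

theorem exists_crossMatching_of_injOn (s : Finset V) (f : V → V) (hf : Set.InjOn f s)
    (hfs : ∀ a ∈ s, f a ∈ G.crossNeighbors A a) :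
    ∃ M : Finset (V × V), M.card = #s ∧
      (∀ p ∈ M, G.Adj p.1 p.2 ∧ p.1 ∈ A ∧ p.2 ∉ A) ∧
      (∀ p ∈ M, ∀ q ∈ M, p ≠ q →
        p.1 ≠ q.1 ∧ p.1 ≠ q.2 ∧ p.2 ≠ q.1 ∧ p.2 ≠ q.2) := by
  refine ⟨s.image fun a => (a, f a), card_image_of_injective _ fun a b h => congrArg Prod.fst h,
    ?_, ?_⟩
  · simp only [mem_image, forall_exists_index, and_imp]
    rintro _ a ha rfl
    obtain ⟨haA, hfA, hadj⟩ := mem_crossNeighbors.mp (hfs a ha)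
    exact ⟨hadj, haA, hfA⟩
  · simp only [mem_image, forall_exists_index, and_imp]
    rintro _ a ha rfl _ b hb rfl hab
    obtain ⟨haA, hfaA, -⟩ := mem_crossNeighbors.mp (hfs a ha)
    obtain ⟨hbA, hfbA, -⟩ := mem_crossNeighbors.mp (hfs b hb)
    have hne : a ≠ b := fun h => hab (h ▸ rfl)
    exact ⟨hne, fun (h : a = f b) => hfbA (h ▸ haA), fun (h : f a = b) => hfaA (h ▸ hbA),
      fun h => hne (hf ha hb h)⟩

end SimpleGraph

/-- If `G` is `k`-connected (it has more than `k` vertices and deleting any fewer than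
`k` vertices leaves it connected) and `A ⊆ V(G)` has `|A| ≥ k` and `|V(G)\A| ≥ k`,
then there is a matching of size `k` between `A` and `V(G)\A`: a set of `k` pairwise
vertex-disjoint edges, each with one endpoint in `A` and the other outside `A`. -/
theorem stmt6 {V : Type*} [Fintype V] [DecidableEq V] (k : ℕ) (G : SimpleGraph V)
    (hcard : k < Fintype.card V)
    (hconn : ∀ S : Finset V, S.card < k → (G.induce ((↑S : Set V)ᶜ)).Connected)
    (A : Finset V) (hA : k ≤ A.card) (hAc : k ≤ Aᶜ.card) :
    ∃ M : Finset (V × V), M.card = k ∧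
      (∀ p ∈ M, G.Adj p.1 p.2 ∧ p.1 ∈ A ∧ p.2 ∉ A) ∧
      (∀ p ∈ M, ∀ q ∈ M, p ≠ q →
        p.1 ≠ q.1 ∧ p.1 ≠ q.2 ∧ p.2 ≠ q.1 ∧ p.2 ≠ q.2) := by
  have : Nonempty V := Fintype.card_pos_iff.mp (by omega)
  obtain ⟨s, hs, f, hf, hfs⟩ := exists_injOn_of_all_card_le_biUnion_card_add
    (G.crossNeighbors A) (Fintype.card V - k)
    (G.card_le_card_biUnion_crossNeighbors_add hconn hA hAc)
  obtain ⟨s', hs's, hs'k⟩ := exists_subset_card_eq (show k ≤ #s by omega)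
  obtain ⟨M, hMs', hM⟩ := G.exists_crossMatching_of_injOn s' f (hf.mono hs's)
    fun a ha => hfs a (hs's ha)
  exact ⟨M, hMs'.trans hs'k, hM⟩
end

section
/- Let 0 < ν ≤ τ ≤ ε < 1 with ε ≥ 2ν/τ. Let G be a graph on n vertices with minimum degree δ(G) ≥ (1/2 + ε)n. Then G is a robust (ν,τ)-expander: for every S ⊆ V(G) with τn ≤ |S| ≤ (1-τ)n, the set RN_{ν}(S) of vertices with at least νn neighbours in S satisfies |RN_ν(S)| ≥ |S| + νn. -/
/-!
Count the pairs `(v, s)` with `s ∈ S` adjacent to `v` in two ways: by the minimum degree there are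
at least `|S|(1/2 + ε)n` of them, while each vertex of `RN_ν(S)` contributes at most `|S|` and every
other vertex less than `νn`. Since `|S| ≥ τn` and `ν/τ ≤ ε/2`, this forces `|RN_ν(S)| ≥ (1/2 + ε/2)n`,
which beats `|S| + νn` unless `|S| ≥ (1/2 - ε + ν)n`. For such large `S` every vertex already has
`deg v + |S| - n ≥ νn` neighbours in `S`, so `RN_ν(S)` is everything.
-/

open Finset

theorem Finset.sum_le_card_filter_mul_add_card_mul {ι : Type*} (s : Finset ι) (f : ι → ℝ)
    {t M : ℝ} (ht : 0 ≤ t) (hM : ∀ i ∈ s, f i ≤ M) :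
    ∑ i ∈ s, f i ≤ #{i ∈ s | t ≤ f i} * M + #s * t := by
  rw [← sum_filter_add_sum_filter_not s (t ≤ f ·)]
  gcongr
  · simpa using sum_le_card_nsmul _ f M fun i hi => hM i (mem_filter.1 hi).1
  · calc ∑ i ∈ s with ¬t ≤ f i, f i ≤ #{i ∈ s | ¬t ≤ f i} * t := by
          simpa using sum_le_card_nsmul _ f t fun i hi => le_of_not_ge (mem_filter.1 hi).2
      _ ≤ #s * t := by gcongr; exact filter_subset _ s

namespace SimpleGraph

variable {V : Type*} [Fintype V] [DecidableEq V] (G : SimpleGraph V) [DecidableRel G.Adj]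

noncomputable def robustNbhd (ν : ℝ) (S : Finset V) : Finset V :=
  {v | ν * (Fintype.card V : ℝ) ≤ #(G.neighborFinset v ∩ S)}

def IsRobustExpander (ν τ : ℝ) : Prop :=
  ∀ S : Finset V, τ * (Fintype.card V : ℝ) ≤ #S → (#S : ℝ) ≤ (1 - τ) * Fintype.card V →
    (#S : ℝ) + ν * Fintype.card V ≤ #(G.robustNbhd ν S)

theorem sum_card_neighborFinset_inter (S : Finset V) :
    ∑ v, #(G.neighborFinset v ∩ S) = ∑ s ∈ S, G.degree s := by
  convert sum_card_bipartiteAbove_eq_sum_card_bipartiteBelow (s := univ) (t := S) (r := G.Adj)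
    using 3 with v _ s _
  · ext; simp [bipartiteAbove, and_comm]
  · rw [← card_neighborFinset_eq_degree]; congr 1; ext; simp [bipartiteBelow, adj_comm]

theorem degree_add_card_le_card_neighborFinset_inter_add (v : V) (S : Finset V) :
    G.degree v + #S ≤ #(G.neighborFinset v ∩ S) + Fintype.card V := by
  rw [← card_neighborFinset_eq_degree, ← card_inter_add_card_union]
  gcongr
  exact card_le_univ _

theorem robustNbhd_eq_univ {ν : ℝ} {S : Finset V}
    (h : ∀ v, (1 + ν) * Fintype.card V ≤ G.degree v + #S) : G.robustNbhd ν S = univ := by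
  refine eq_univ_of_forall fun v => mem_filter.2 ⟨mem_univ v, ?_⟩
  have : ((G.degree v + #S : ℕ) : ℝ) ≤ (#(G.neighborFinset v ∩ S) + Fintype.card V : ℕ) :=
    Nat.cast_le.2 (G.degree_add_card_le_card_neighborFinset_inter_add v S)
  push_cast at this
  linarith [h v]

theorem card_mul_le_card_robustNbhd_mul_add {ν d : ℝ} (hν : 0 ≤ ν) (S : Finset V)
    (hd : ∀ v, d ≤ G.degree v) :
    #S * d ≤ #(G.robustNbhd ν S) * #S + ν * (Fintype.card V : ℝ) ^ 2 := by
  calc (#S : ℝ) * d ≤ ∑ s ∈ S, (G.degree s : ℝ) := by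
        simpa using card_nsmul_le_sum S _ d fun s _ => hd s
    _ = ∑ v, (#(G.neighborFinset v ∩ S) : ℝ) := by
        exact_mod_cast (G.sum_card_neighborFinset_inter S).symm
    _ ≤ _ := by
      have := sum_le_card_filter_mul_add_card_mul univ (fun v => (#(G.neighborFinset v ∩ S) : ℝ))
        (t := ν * Fintype.card V) (M := #S) (by positivity)
        fun v _ => by exact_mod_cast card_le_card inter_subset_right
      rw [card_univ] at this
      unfold robustNbhd
      linarith

theorem isRobustExpander_of_minDegree {ν τ ε : ℝ} (hν : 0 < ν) (hντ : ν ≤ τ)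
    (hντε : 2 * ν / τ ≤ ε) (hδ : ∀ v, (1 / 2 + ε) * Fintype.card V ≤ G.degree v) :
    G.IsRobustExpander ν τ := by
  intro S hτS hSτ
  set n : ℝ := (Fintype.card V : ℝ)
  have hn_nonneg : 0 ≤ n := Nat.cast_nonneg _
  by_cases hS : (1 / 2 - ε + ν) * n ≤ #S
  · rw [G.robustNbhd_eq_univ fun v => by linarith [hδ v], card_univ]
    nlinarith
  rw [not_le] at hS
  have hτ : 0 < τ := hν.trans_le hντ
  have hn : 0 < n := by
    refine hn_nonneg.lt_of_ne fun h => ?_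
    rw [← h, mul_zero] at hS
    exact (Nat.cast_nonneg _).not_gt hS
  have hSpos : 0 < (#S : ℝ) := (mul_pos hτ hn).trans_le hτS
  have hτ1 : τ ≤ 1 := by
    have : (#S : ℝ) ≤ n := Nat.cast_le.2 (card_le_univ S)
    nlinarith
  have hνε : ν / τ ≤ ε / 2 := by rw [mul_div_assoc] at hντε; linarith
  have hε : 0 ≤ ε := le_trans (by positivity) hντε
  have hRN : (1 / 2 + ε / 2) * n ≤ #(G.robustNbhd ν S) := by
    have hcount := G.card_mul_le_card_robustNbhd_mul_add hν.le S hδ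
    have hsmall : ν * n ^ 2 ≤ ε / 2 * n * #S := calc
      ν * n ^ 2 = ν / τ * n * (τ * n) := by field_simp
      _ ≤ ε / 2 * n * #S := by gcongr
    refine le_of_mul_le_mul_right ?_ hSpos
    nlinarith
  have h2ν : 2 * ν ≤ ε := calc
    2 * ν = 2 * ν / τ * τ := by field_simp
    _ ≤ ε * 1 := by gcongr
    _ = ε := mul_one ε
  nlinarith

end SimpleGraph

theorem stmt7_general {V : Type*} [Fintype V] [DecidableEq V] (G : SimpleGraph V)
    [DecidableRel G.Adj] (ν τ ε : ℝ)
    (hν : 0 < ν) (hντ : ν ≤ τ) (hbig : 2 * ν / τ ≤ ε)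
    (hδ : ∀ v : V, (1/2 + ε) * (Fintype.card V : ℝ) ≤ (G.degree v : ℝ)) :
    ∀ S : Finset V, τ * (Fintype.card V : ℝ) ≤ S.card →
      (S.card : ℝ) ≤ (1 - τ) * (Fintype.card V : ℝ) →
      (S.card : ℝ) + ν * (Fintype.card V : ℝ) ≤
        ((Finset.univ.filter fun v =>
          ν * (Fintype.card V : ℝ) ≤ ((G.neighborFinset v ∩ S).card : ℝ)).card : ℝ) :=
  G.isRobustExpander_of_minDegree hν hντ hbig hδ

/-- Let `0 < ν ≤ τ ≤ ε < 1` with `ε ≥ 2ν/τ`.  If `G` is a graph on `n` vertices with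
minimum degree at least `(1/2 + ε)n`, then `G` is a robust `(ν,τ)`-expander: every
`S ⊆ V(G)` with `τn ≤ |S| ≤ (1-τ)n` satisfies `|RN_ν(S)| ≥ |S| + νn`, where
`RN_ν(S)` is the set of vertices with at least `νn` neighbours in `S`. -/
theorem stmt7 {V : Type*} [Fintype V] [DecidableEq V] (G : SimpleGraph V)
    [DecidableRel G.Adj] (ν τ ε : ℝ)
    (hν : 0 < ν) (hντ : ν ≤ τ) (hτε : τ ≤ ε) (hε : ε < 1) (hbig : 2 * ν / τ ≤ ε)
    (hδ : ∀ v : V, (1/2 + ε) * (Fintype.card V : ℝ) ≤ (G.degree v : ℝ)) :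
    ∀ S : Finset V, τ * (Fintype.card V : ℝ) ≤ S.card →
      (S.card : ℝ) ≤ (1 - τ) * (Fintype.card V : ℝ) →
      (S.card : ℝ) + ν * (Fintype.card V : ℝ) ≤
        ((Finset.univ.filter fun v =>
          ν * (Fintype.card V : ℝ) ≤ ((G.neighborFinset v ∩ S).card : ℝ)).card : ℝ) :=
  stmt7_general G ν τ ε hν hντ hbig hδ
end

section
/- Let 0 < 1/n ≪ ν ≪ τ ≪ η ≤ 1. Suppose G is a digraph on n vertices that is a robust (ν,τ)-outexpander with minimum semidegree δ⁰(G) ≥ ηn. Then for any two distinct vertices x, y there is a directed path from x to y in G with at most 1/ν vertices. -/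
/-!
Grow the sets `R₀ = {x} ∪ N⁺(x)` and `Rᵢ₊₁ = Rᵢ ∪ RN⁺_ν(Rᵢ)`; every vertex of `Rᵢ` is reached
from `x` by a walk with at most `i + 2` vertices. As long as `|Rᵢ| ≤ (1 - τ)n`, the set `Rᵢ` has
at least `ηn ≥ τn` vertices, so robust expansion adds `νn` new vertices in each round. After
`⌈(1 - η)/ν⌉` rounds `|Rᵢ| > (1 - τ)n`, so `Rᵢ` meets the in-neighbourhood of `y`, which has
`ηn ≥ τn` vertices. This gives a walk from `x` to `y` with at most `(1 - η)/ν + 4 ≤ 1/ν` vertices,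
which shortcuts to a path.
-/

open Finset

namespace List

variable {α : Type*} {r : α → α → Prop}

theorem IsChain.exists_nodup : ∀ {l : List α}, l.IsChain r →
    ∃ m : List α, m.Nodup ∧ m.IsChain r ∧ m.head? = l.head? ∧ m.getLast? = l.getLast? ∧
      m.length ≤ l.length
  | [], _ => ⟨[], by simp⟩
  | a :: t, h => by
    have ht : t.IsChain r := h.tail
    obtain ⟨m, hnd, hm, hhead, hlast, hlen⟩ := ht.exists_nodup
    -- if `a` reoccurs in the shortcut tail, drop everything before that occurrence
    by_cases ha : a ∈ m
    · obtain ⟨s, u, rfl⟩ := append_of_mem ha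
      refine ⟨a :: u, hnd.sublist (sublist_append_right s _), hm.suffix (suffix_append s _),
        rfl, ?_, ?_⟩
      · rw [getLast?_cons, getLast?_cons, ← hlast, getLast?_append_cons, getLast?_cons]
        rfl
      · simp only [length_append, length_cons] at hlen ⊢
        omega
    · refine ⟨a :: m, nodup_cons.2 ⟨ha, hnd⟩, hm.cons ?_, rfl, ?_, by simpa using hlen⟩
      · rw [hhead]
        exact h.rel_head?
      · rw [getLast?_cons, getLast?_cons, hlast]

end List

section WalkWithin

variable {α : Type*} {r : α → α → Prop} {k m : ℕ} {x y z : α}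

-- `k` bounds the number of vertices of the walk, not its number of edges.
def WalkWithin (r : α → α → Prop) (k : ℕ) (x y : α) : Prop :=
  ∃ l : List α, l.IsChain r ∧ l.head? = some x ∧ l.getLast? = some y ∧ l.length ≤ k

theorem WalkWithin.single (x : α) : WalkWithin r 1 x x :=
  ⟨[x], List.isChain_singleton x, rfl, rfl, le_rfl⟩

theorem WalkWithin.mono (h : WalkWithin r k x y) (hkm : k ≤ m) : WalkWithin r m x y :=
  let ⟨p, hp, hx, hy, hk⟩ := h
  ⟨p, hp, hx, hy, hk.trans hkm⟩

theorem WalkWithin.snoc (h : WalkWithin r k x y) (hyz : r y z) : WalkWithin r (k + 1) x z := by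
  obtain ⟨p, hp, hx, hy, hk⟩ := h
  refine ⟨p ++ [z], hp.append (List.isChain_singleton z) ?_, ?_, by simp, by simpa using hk⟩
  · simpa [hy] using hyz
  · simp [List.head?_append, hx]

theorem WalkWithin.exists_nodup (h : WalkWithin r k x y) :
    ∃ p : List α, p ≠ [] ∧ p.Nodup ∧ p.IsChain r ∧ p.head? = some x ∧ p.getLast? = some y ∧
      p.length ≤ k := by
  obtain ⟨p, hp, hx, hy, hk⟩ := h
  obtain ⟨m, hnd, hm, hmx, hmy, hlen⟩ := hp.exists_nodup
  refine ⟨m, ?_, hnd, hm, hmx.trans hx, hmy.trans hy, hlen.trans hk⟩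
  rintro rfl
  simp [← hmx] at hx

end WalkWithin

section RobustExpansion

variable {V : Type*} [Fintype V] (Adj : V → V → Prop) [DecidableRel Adj]
  {ν τ η : ℝ} {x y : V}

noncomputable def robustOutNbhd (ν : ℝ) (S : Finset V) : Finset V :=
  univ.filter fun v => ν * Fintype.card V ≤ (#(S.filter fun u => Adj u v) : ℝ)

def IsRobustOutexpander (ν τ : ℝ) : Prop :=
  ∀ S : Finset V, τ * Fintype.card V ≤ #S → (#S : ℝ) ≤ (1 - τ) * Fintype.card V →
    (#S : ℝ) + ν * Fintype.card V ≤ #(robustOutNbhd Adj ν S)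

variable [DecidableEq V]

noncomputable def robustReach (ν : ℝ) (x : V) : ℕ → Finset V
  | 0 => insert x (univ.filter (Adj x ·))
  | i + 1 => robustReach ν x i ∪ robustOutNbhd Adj ν (robustReach ν x i)

variable {Adj}

omit [DecidableEq V] in
theorem exists_adj_of_mem_robustOutNbhd (hν : 0 < ν) {S : Finset V} {v : V}
    (hv : v ∈ robustOutNbhd Adj ν S) : ∃ u ∈ S, Adj u v := by
  have : Nonempty V := ⟨v⟩
  have hpos : (0 : ℝ) < ν * Fintype.card V := by have := Fintype.card_pos (α := V); positivity
  have hcard := (mem_filter.1 hv).2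
  obtain ⟨u, hu⟩ := card_pos.1 (by exact_mod_cast hpos.trans_le hcard : 0 < #(S.filter (Adj · v)))
  exact ⟨u, (mem_filter.1 hu).1, (mem_filter.1 hu).2⟩

theorem walkWithin_of_mem_robustReach (hν : 0 < ν) :
    ∀ {i : ℕ} {v : V}, v ∈ robustReach Adj ν x i → WalkWithin Adj (i + 2) x v
  | 0, v, hv => by
    rcases mem_insert.1 hv with rfl | hv
    · exact (WalkWithin.single v).mono (by norm_num)
    · exact (WalkWithin.single x).snoc (mem_filter.1 hv).2
  | i + 1, v, hv => by
    rcases mem_union.1 hv with hv | hv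
    · exact (walkWithin_of_mem_robustReach hν hv).mono (by omega)
    · obtain ⟨u, hu, huv⟩ := exists_adj_of_mem_robustOutNbhd hν hv
      exact (walkWithin_of_mem_robustReach hν hu).snoc huv

theorem card_robustReach_growth (hexp : IsRobustOutexpander Adj ν τ) (hν : 0 ≤ ν) (hτη : τ ≤ η)
    (hx : η * Fintype.card V ≤ #(univ.filter (Adj x ·))) :
    ∀ i : ℕ, (1 - τ) * Fintype.card V < #(robustReach Adj ν x i) ∨
      η * Fintype.card V + i * (ν * Fintype.card V) ≤ #(robustReach Adj ν x i)
  | 0 => by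
    right
    have : #(univ.filter (Adj x ·)) ≤ #(robustReach Adj ν x 0) := card_le_card (subset_insert _ _)
    push_cast
    linarith [(Nat.cast_le (α := ℝ)).2 this]
  | i + 1 => by
    have hmono : (#(robustReach Adj ν x i) : ℝ) ≤ #(robustReach Adj ν x (i + 1)) := by
      exact_mod_cast card_le_card subset_union_left
    by_cases hbig : (1 - τ) * Fintype.card V < #(robustReach Adj ν x i)
    · exact .inl (hbig.trans_le hmono)
    have hgrow := (card_robustReach_growth hexp hν hτη hx i).resolve_left hbig
    right
    have hτ : τ * Fintype.card V ≤ #(robustReach Adj ν x i) := by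
      have : 0 ≤ (i : ℝ) * (ν * Fintype.card V) := by positivity
      nlinarith [(Nat.cast_nonneg (α := ℝ) (Fintype.card V))]
    have hnew : (#(robustOutNbhd Adj ν (robustReach Adj ν x i)) : ℝ) ≤
        #(robustReach Adj ν x (i + 1)) := by
      exact_mod_cast card_le_card subset_union_right
    push_cast
    linarith [hexp _ hτ (not_lt.1 hbig)]

theorem walkWithin_of_isRobustOutexpander (hexp : IsRobustOutexpander Adj ν τ) (hν : 0 < ν)
    (hτ : 0 < τ) (hτη : τ ≤ η) (hx : η * Fintype.card V ≤ #(univ.filter (Adj x ·)))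
    (hy : η * Fintype.card V ≤ #(univ.filter (Adj · y))) :
    WalkWithin Adj (⌈(1 - η) / ν⌉₊ + 3) x y := by
  set K := ⌈(1 - η) / ν⌉₊
  have hn : (0 : ℝ) < Fintype.card V := by
    have : Nonempty V := ⟨x⟩
    exact_mod_cast Fintype.card_pos
  have hK : 1 - η ≤ K * ν := (div_le_iff₀ hν).1 (Nat.le_ceil _)
  have hbig : (1 - τ) * Fintype.card V < #(robustReach Adj ν x K) := by
    rcases card_robustReach_growth hexp hν.le hτη hx K with h | h
    · exact h
    · nlinarith
  obtain ⟨u, hu⟩ : (robustReach Adj ν x K ∩ univ.filter (Adj · y)).Nonempty := by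
    refine inter_nonempty_of_card_lt_card_add_card (subset_univ _) (subset_univ _) ?_
    have : (Fintype.card V : ℝ) < #(robustReach Adj ν x K) + #(univ.filter (Adj · y)) := by
      nlinarith
    rw [card_univ]
    exact_mod_cast this
  obtain ⟨hux, huy⟩ := mem_inter.1 hu
  exact (walkWithin_of_mem_robustReach hν hux).snoc (mem_filter.1 huy).2

end RobustExpansion

theorem natCeil_one_sub_div_add_three_le {ν η : ℝ} (hν : 0 < ν) (hνη : 4 * ν ≤ η) (hη : η ≤ 1) :
    (⌈(1 - η) / ν⌉₊ + 3 : ℝ) ≤ 1 / ν := by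
  have hceil := Nat.ceil_lt_add_one (div_nonneg (sub_nonneg.2 hη) hν.le)
  have h4 : 4 ≤ η / ν := (le_div_iff₀ hν).2 hνη
  have hsplit : (1 - η) / ν + η / ν = 1 / ν := by rw [← add_div, sub_add_cancel]
  linarith

/-- Let `0 < 1/n ≪ ν ≪ τ ≪ η ≤ 1`.  If `G` is a robust `(ν,τ)`-outexpander on `n`
vertices with minimum semidegree `δ⁰(G) ≥ ηn`, then any two distinct vertices `x, y`
are joined by a directed path from `x` to `y` with at most `1/ν` vertices.
The hierarchy is formalised by nested existential quantifiers. -/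
theorem stmt9 :
    ∀ η : ℝ, 0 < η → η ≤ 1 →
    ∃ τ₀ : ℝ, 0 < τ₀ ∧ ∀ τ : ℝ, 0 < τ → τ ≤ τ₀ →
    ∃ ν₀ : ℝ, 0 < ν₀ ∧ ∀ ν : ℝ, 0 < ν → ν ≤ ν₀ →
    ∃ n₀ : ℕ, ∀ n : ℕ, n₀ ≤ n →
    ∀ (V : Type) [Fintype V] [DecidableEq V] (Adj : V → V → Prop) [DecidableRel Adj],
      Fintype.card V = n →
      -- robust (ν,τ)-outexpander
      (∀ S : Finset V, τ * (n : ℝ) ≤ S.card → (S.card : ℝ) ≤ (1 - τ) * n →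
        (S.card : ℝ) + ν * n ≤
          ((Finset.univ.filter fun v : V =>
            ν * (n : ℝ) ≤ ((S.filter fun u => Adj u v).card : ℝ)).card : ℝ)) →
      -- minimum semidegree at least ηn
      (∀ v : V, η * (n : ℝ) ≤ ((Finset.univ.filter fun u => Adj v u).card : ℝ) ∧
        η * (n : ℝ) ≤ ((Finset.univ.filter fun u => Adj u v).card : ℝ)) →
      ∀ x y : V, x ≠ y →
        ∃ l : List V, l ≠ [] ∧ l.Nodup ∧ l.Chain' Adj ∧
          l.head? = some x ∧ l.getLast? = some y ∧ (l.length : ℝ) ≤ 1 / ν := by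
  intro η hη hη1
  refine ⟨η, hη, fun τ hτ hτη => ⟨η / 4, by positivity, fun ν hν hνη => ⟨0, ?_⟩⟩⟩
  rintro n - V _ _ Adj _ rfl hexp hdeg x y -
  obtain ⟨p, hp, hnd, hchain, hx, hy, hlen⟩ :=
    (walkWithin_of_isRobustOutexpander hexp hν hτ hτη (hdeg x).1 (hdeg y).2).exists_nodup
  refine ⟨p, hp, hnd, hchain, hx, hy, ?_⟩
  calc (p.length : ℝ) ≤ ⌈(1 - η) / ν⌉₊ + 3 := by exact_mod_cast hlen
    _ ≤ 1 / ν := natCeil_one_sub_div_add_three_le hν (by linarith) hη1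
end

section
/- Let 0 < 1/n ≪ ν ≪ τ ≪ η < 1. Let G be a balanced bipartite graph with vertex classes A, B, |A| = |B| = n, minimum degree δ(G) ≥ ηn, which is a bipartite robust (ν,τ)-expander with bipartition A, B. Then G contains a perfect matching. -/
/-!
Hall's condition `|N(S)| ≥ |S|` for `S ⊆ A` holds in three regimes. If `|S| < τn`, a single vertex
of `S` already has at least `ηn ≥ τn` neighbours. If `τn ≤ |S| ≤ (1-τ)n`, robust expansion gives
`|RN_ν(S) ∩ B| ≥ |S|`, and every robust neighbour is a neighbour since `ν|V| > 0`. If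
`|S| > (1-τ)n`, every `b ∈ B` has more than `|A \ S|` neighbours, so one of them lies in `S`; hence
`N(S) = B`.
-/

open Finset

namespace SimpleGraph

variable {V : Type*} [Fintype V] [DecidableEq V] {G : SimpleGraph V} [DecidableRel G.Adj]

/-- The set `RN_ν(S) ∩ B`. -/
noncomputable def robustNeighborFinset (G : SimpleGraph V) [DecidableRel G.Adj] (ν : ℝ)
    (S B : Finset V) : Finset V :=
  {v ∈ B | ν * Fintype.card V ≤ #(G.neighborFinset v ∩ S)}

def IsBipartiteRobustExpander (G : SimpleGraph V) [DecidableRel G.Adj] (ν τ : ℝ)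
    (A B : Finset V) : Prop :=
  ∀ S ⊆ A, τ * #A ≤ #S → #S ≤ (1 - τ) * #A →
    #S + ν * Fintype.card V ≤ #(G.robustNeighborFinset ν S B)

theorem exists_isPerfectMatching_of_forall_card_le_card_biUnion {A B : Finset V}
    (hG : G.IsBipartiteWith A B) (hcover : A ∪ B = univ) (hcard : #A = #B)
    (hall : ∀ S ⊆ A, #S ≤ #(S.biUnion fun v ↦ G.neighborFinset v)) :
    ∃ M : G.Subgraph, M.IsPerfectMatching := by
  obtain ⟨f, hf_inj, hf_adj⟩ :=
    (all_card_le_biUnion_card_iff_exists_injective fun a : (↑A : Set V) ↦ G.neighborFinset a).1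
      fun s ↦ by
        simpa [map_eq_image, image_biUnion, card_image_of_injective _ Subtype.val_injective]
          using hall (s.map (Function.Embedding.subtype _)) (by intro x; simp +contextual)
  let g : (↑A : Set V) → (↑B : Set V) :=
    fun a ↦ ⟨f a, isBipartiteWith_neighborFinset_subset hG a.2 (hf_adj a)⟩
  have hg : Function.Bijective g := by
    refine (Fintype.bijective_iff_injective_and_card g).2 ⟨fun a b h ↦ hf_inj congr(($h).1), ?_⟩
    simpa using hcard
  obtain ⟨M, hM_verts, hM⟩ := Subgraph.IsMatching.exists_of_disjoint_sets_of_equiv hG.disjoint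
    (Equiv.ofBijective g hg) fun a ↦ (G.mem_neighborFinset _ _).1 (hf_adj a)
  refine ⟨M, hM, Subgraph.isSpanning_iff.2 ?_⟩
  rw [hM_verts, ← coe_union, hcover, coe_univ]

lemma mem_biUnion_neighborFinset_of_nonempty_inter {S : Finset V} {v : V}
    (h : (G.neighborFinset v ∩ S).Nonempty) : v ∈ S.biUnion fun u ↦ G.neighborFinset u := by
  obtain ⟨u, hu⟩ := h
  rw [mem_inter, mem_neighborFinset] at hu
  exact mem_biUnion.2 ⟨u, hu.2, (G.mem_neighborFinset _ _).2 hu.1.symm⟩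

lemma card_le_card_biUnion_neighborFinset_of_le_degree {S : Finset V} {a : V} (ha : a ∈ S)
    (h : #S ≤ G.degree a) : #S ≤ #(S.biUnion fun v ↦ G.neighborFinset v) :=
  h.trans <| (card_neighborFinset_eq_degree G a).symm.le.trans <|
    card_le_card <| subset_biUnion_of_mem (fun v ↦ G.neighborFinset v) ha

lemma robustNeighborFinset_subset_biUnion {ν : ℝ} {S B : Finset V}
    (hν : 0 < ν * Fintype.card V) :
    G.robustNeighborFinset ν S B ⊆ S.biUnion fun v ↦ G.neighborFinset v := by
  intro v hv
  refine mem_biUnion_neighborFinset_of_nonempty_inter (card_pos.1 ?_)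
  exact_mod_cast hν.trans_le (mem_filter.1 hv).2

lemma subset_biUnion_neighborFinset_of_card_sdiff_lt_degree {A B S : Finset V}
    (hG : G.IsBipartiteWith A B) (h : ∀ b ∈ B, #(A \ S) < G.degree b) :
    B ⊆ S.biUnion fun v ↦ G.neighborFinset v := by
  intro b hb
  refine mem_biUnion_neighborFinset_of_nonempty_inter ?_
  by_contra hempty
  have hsub : G.neighborFinset b ⊆ A \ S := fun v hv ↦
    mem_sdiff.2 ⟨isBipartiteWith_neighborFinset_subset' hG hb hv,
      fun hvS ↦ hempty ⟨v, mem_inter.2 ⟨hv, hvS⟩⟩⟩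
  have := card_le_card hsub
  rw [card_neighborFinset_eq_degree] at this
  exact (h b hb).not_ge this

theorem IsBipartiteRobustExpander.card_le_card_biUnion {ν τ : ℝ} {A B : Finset V}
    (hexp : G.IsBipartiteRobustExpander ν τ A B) (hG : G.IsBipartiteWith A B) (hcard : #A = #B)
    (hν : 0 < ν) (hδ : ∀ v, τ * #A ≤ G.degree v) (S : Finset V) (hS : S ⊆ A) :
    #S ≤ #(S.biUnion fun v ↦ G.neighborFinset v) := by
  obtain rfl | ⟨a, ha⟩ := S.eq_empty_or_nonempty
  · simp
  rcases lt_or_ge (#S : ℝ) (τ * #A) with hsmall | hmid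
  · exact card_le_card_biUnion_neighborFinset_of_le_degree ha <| by
      exact_mod_cast hsmall.le.trans (hδ a)
  rcases le_or_gt (#S : ℝ) ((1 - τ) * #A) with hmid' | hlarge
  · have hV : 0 < ν * Fintype.card V := mul_pos hν (by exact_mod_cast Fintype.card_pos_iff.2 ⟨a⟩)
    have hS_le : (#S : ℝ) ≤ #(G.robustNeighborFinset ν S B) := by
      linarith [hexp S hS hmid hmid']
    exact (Nat.cast_le.1 hS_le).trans (card_le_card (robustNeighborFinset_subset_biUnion hV))
  · have hB := subset_biUnion_neighborFinset_of_card_sdiff_lt_degree hG fun b _ ↦ by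
      have : (#(A \ S) : ℝ) = #A - #S := by
        rw [card_sdiff_of_subset hS, Nat.cast_sub (card_le_card hS)]
      have := hδ b
      exact_mod_cast (by linarith : (#(A \ S) : ℝ) < G.degree b)
    exact (card_le_card hS).trans (hcard.trans_le (card_le_card hB))

end SimpleGraph

/-- Let `0 < 1/n ≪ ν ≪ τ ≪ η < 1`.  If `G` is a balanced bipartite graph with vertex
classes `A, B` of size `n`, minimum degree at least `ηn`, and `G` is a bipartite robust
`(ν,τ)`-expander with bipartition `A, B` (every `S ⊆ A` with `τ|A| ≤ |S| ≤ (1-τ)|A|`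
satisfies `|RN_ν(S) ∩ B| ≥ |S| + ν|V(G)|`), then `G` contains a perfect matching. -/
theorem stmt10 :
    ∀ η : ℝ, 0 < η → η < 1 →
    ∃ τ₀ : ℝ, 0 < τ₀ ∧ ∀ τ : ℝ, 0 < τ → τ ≤ τ₀ →
    ∃ ν₀ : ℝ, 0 < ν₀ ∧ ∀ ν : ℝ, 0 < ν → ν ≤ ν₀ →
    ∃ n₀ : ℕ, ∀ n : ℕ, n₀ ≤ n →
    ∀ (V : Type) [Fintype V] [DecidableEq V] (G : SimpleGraph V) [DecidableRel G.Adj]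
      (A B : Finset V),
      Disjoint A B → A ∪ B = Finset.univ → A.card = n → B.card = n →
      -- G is bipartite with classes A, B
      (∀ u v : V, G.Adj u v → (u ∈ A ∧ v ∈ B) ∨ (u ∈ B ∧ v ∈ A)) →
      -- minimum degree at least ηn
      (∀ v : V, η * (n : ℝ) ≤ (G.degree v : ℝ)) →
      -- bipartite robust (ν,τ)-expander with bipartition A, B
      (∀ S ⊆ A, τ * (A.card : ℝ) ≤ S.card → (S.card : ℝ) ≤ (1 - τ) * A.card →
        (S.card : ℝ) + ν * (Fintype.card V : ℝ) ≤
          ((B.filter fun v =>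
            ν * (Fintype.card V : ℝ) ≤ ((G.neighborFinset v ∩ S).card : ℝ)).card : ℝ)) →
      ∃ M : G.Subgraph, M.IsPerfectMatching := by
  intro η hη _
  refine ⟨η, hη, fun τ _ hτη ↦ ⟨1, one_pos, fun ν hν _ ↦ ⟨0, fun n _ V _ _ G _ A B hAB hcover hA hB
    hbip hdeg hexp ↦ ?_⟩⟩⟩
  have hG : G.IsBipartiteWith A B := ⟨disjoint_coe.2 hAB, fun u v h ↦ by simpa using hbip u v h⟩
  have hcard : #A = #B := hA.trans hB.symm
  have hδ : ∀ v, τ * #A ≤ G.degree v := fun v ↦ by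
    rw [hA]
    exact (mul_le_mul_of_nonneg_right hτη n.cast_nonneg).trans (hdeg v)
  exact G.exists_isPerfectMatching_of_forall_card_le_card_biUnion hG hcover hcard
    (SimpleGraph.IsBipartiteRobustExpander.card_le_card_biUnion hexp hG hcard hν hδ)
end

section
/- Let G be a balanced bipartite graph with classes A, B of size n, δ(G) ≥ ηn, which is a bipartite robust (ν,τ)-expander with bipartition A, B, and let M be a perfect matching of G. Then the M-auxiliary digraph G* of G is a robust (ν,τ)-outexpander on n vertices with minimum semidegree δ⁰(G*) ≥ ηn/2 (for n sufficiently large). -/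
/-!
Via the matching, a set `S ⊆ B` corresponds to `f(S) ⊆ A` of the same size, and the
in-neighbours of `x` in `G*` from `S` are the images under `f` of the `G`-neighbours of `x`
in `f(S)`, except possibly the partner `f x` of `x`. So in-neighbourhoods in `G*` lose at most
one vertex compared with neighbourhoods in `G`. Since `|V(G)| = 2n`, every vertex with at least
`2νn` neighbours in `f(S)` has at least `2νn - 1 ≥ νn` in-neighbours in `S`, and minimum degree
`ηn` gives semidegrees at least `ηn - 1 ≥ ηn/2`; both inequalities only need `n` large.
-/

open Finset

lemma Finset.cast_card_le_card_erase_add_one {α : Type*} [DecidableEq α] (s : Finset α) (a : α) :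
    (#s : ℝ) ≤ #(s.erase a) + 1 := by
  have := pred_card_le_card_erase (s := s) (a := a)
  exact_mod_cast (show #s ≤ #(s.erase a) + 1 by omega)

lemma le_mul_of_natCeil_div_le {a c : ℝ} {n : ℕ} (hc : 0 < c) (h : ⌈a / c⌉₊ ≤ n) : a ≤ c * n := by
  rw [← div_le_iff₀' hc]
  exact Nat.ceil_le.mp h

namespace SimpleGraph

variable {V : Type*} [Fintype V] {G : SimpleGraph V} [DecidableRel G.Adj]

lemma neighborFinset_subset_right {A B : Finset V}
    (hbip : ∀ u v : V, G.Adj u v → (u ∈ A ∧ v ∈ B) ∨ (u ∈ B ∧ v ∈ A))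
    (hdisj : Disjoint A B) {u : V} (hu : u ∈ A) : G.neighborFinset u ⊆ B := by
  intro v hv
  rcases hbip u v ((G.mem_neighborFinset u v).mp hv) with ⟨-, hvB⟩ | ⟨huB, -⟩
  · exact hvB
  · exact absurd huB (Finset.disjoint_left.mp hdisj hu)

lemma neighborFinset_subset_left {A B : Finset V}
    (hbip : ∀ u v : V, G.Adj u v → (u ∈ A ∧ v ∈ B) ∨ (u ∈ B ∧ v ∈ A))
    (hdisj : Disjoint A B) {u : V} (hu : u ∈ B) : G.neighborFinset u ⊆ A :=
  neighborFinset_subset_right (fun u v h => (hbip u v h).symm) hdisj.symm hu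

variable [DecidableEq V] {f : V → V}

lemma filter_ne_adj_eq_erase {B : Finset V} {w : V} (hw : G.neighborFinset w ⊆ B) (v : V) :
    B.filter (fun x => x ≠ v ∧ G.Adj w x) = (G.neighborFinset w).erase v := by
  ext x
  simp only [mem_filter, mem_erase, mem_neighborFinset]
  exact ⟨fun h => h.2, fun h => ⟨hw ((G.mem_neighborFinset w x).mpr h.2), h⟩⟩

lemma image_filter_ne_adj_eq_erase (hf : Function.Involutive f) (S : Finset V) (x : V) :
    (S.filter fun v => x ≠ v ∧ G.Adj (f v) x).image f =
      (G.neighborFinset x ∩ S.image f).erase (f x) := by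
  ext a
  simp only [mem_image, mem_filter, mem_erase, mem_inter, mem_neighborFinset]
  constructor
  · rintro ⟨v, ⟨hvS, hxv, hadj⟩, rfl⟩
    exact ⟨fun h => hxv (hf.injective h).symm, hadj.symm, v, hvS, rfl⟩
  · rintro ⟨hax, hadj, v, hvS, rfl⟩
    exact ⟨v, ⟨hvS, fun h => hax (h ▸ rfl), hadj.symm⟩, rfl⟩

lemma card_neighborFinset_inter_image_le (hf : Function.Involutive f) (S : Finset V) (x : V) :
    (#(G.neighborFinset x ∩ S.image f) : ℝ) ≤ #(S.filter fun v => x ≠ v ∧ G.Adj (f v) x) + 1 := by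
  rw [← card_image_of_injective (S.filter _) hf.injective, image_filter_ne_adj_eq_erase hf]
  exact cast_card_le_card_erase_add_one _ _

lemma card_add_le_card_robustOutNbhd (hf : Function.Involutive f) {S B : Finset V}
    {ν : ℝ} {n : ℕ} (hνn : 1 ≤ ν * n)
    (hexp : (#(S.image f) : ℝ) + ν * (2 * n) ≤
      #(B.filter fun x => ν * (2 * n) ≤ #(G.neighborFinset x ∩ S.image f))) :
    (#S : ℝ) + ν * n ≤ #(B.filter fun x => ν * n ≤ #(S.filter fun v => x ≠ v ∧ G.Adj (f v) x)) := by
  have hsub : (B.filter fun x => ν * (2 * n) ≤ #(G.neighborFinset x ∩ S.image f)) ⊆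
      B.filter fun x => ν * n ≤ #(S.filter fun v => x ≠ v ∧ G.Adj (f v) x) := by
    refine monotone_filter_right B fun x _ hx => ?_
    have := card_neighborFinset_inter_image_le (G := G) hf S x
    linarith
  have hcard : (#(B.filter fun x => ν * (2 * n) ≤ #(G.neighborFinset x ∩ S.image f)) : ℝ) ≤
      #(B.filter fun x => ν * n ≤ #(S.filter fun v => x ≠ v ∧ G.Adj (f v) x)) := by
    exact_mod_cast card_le_card hsub
  rw [card_image_of_injective S hf.injective] at hexp
  linarith

lemma degree_le_card_outNbrs_add_one {B : Finset V} {v : V} (hN : G.neighborFinset (f v) ⊆ B) :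
    (G.degree (f v) : ℝ) ≤ #(B.filter fun x => x ≠ v ∧ G.Adj (f v) x) + 1 := by
  rw [filter_ne_adj_eq_erase hN, ← G.card_neighborFinset_eq_degree]
  exact cast_card_le_card_erase_add_one _ _

lemma degree_le_card_inNbrs_add_one (hf : Function.Involutive f) {B : Finset V} {v : V}
    (hN : G.neighborFinset v ⊆ B.image f) :
    (G.degree v : ℝ) ≤ #(B.filter fun u => v ≠ u ∧ G.Adj (f u) v) + 1 := by
  rw [← G.card_neighborFinset_eq_degree, ← inter_eq_left.mpr hN]
  exact card_neighborFinset_inter_image_le hf B v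

end SimpleGraph

/-- Let `G` be a balanced bipartite graph with classes `A, B` of size `n`,
`δ(G) ≥ ηn`, which is a bipartite robust `(ν,τ)`-expander with bipartition `A, B`,
and let `M` be a perfect matching of `G` (encoded by an involution `f` matching each
vertex to its partner).  Then the `M`-auxiliary digraph `G*` on vertex set `B`
(with an edge from `v` to `x` iff `x ∈ N_G(f v) \ {v}`) is a robust
`(ν,τ)`-outexpander with minimum semidegree at least `ηn/2`, for `n` large. -/
theorem stmt11 :
    ∀ η : ℝ, 0 < η → η < 1 →
    ∃ τ₀ : ℝ, 0 < τ₀ ∧ ∀ τ : ℝ, 0 < τ → τ ≤ τ₀ →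
    ∃ ν₀ : ℝ, 0 < ν₀ ∧ ∀ ν : ℝ, 0 < ν → ν ≤ ν₀ →
    ∃ n₀ : ℕ, ∀ n : ℕ, n₀ ≤ n →
    ∀ (V : Type) [Fintype V] [DecidableEq V] (G : SimpleGraph V) [DecidableRel G.Adj]
      (A B : Finset V) (f : V → V),
      Disjoint A B → A ∪ B = Finset.univ → A.card = n → B.card = n →
      -- G is bipartite with classes A, B
      (∀ u v : V, G.Adj u v → (u ∈ A ∧ v ∈ B) ∨ (u ∈ B ∧ v ∈ A)) →
      -- minimum degree at least ηn
      (∀ v : V, η * (n : ℝ) ≤ (G.degree v : ℝ)) →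
      -- bipartite robust (ν,τ)-expander with bipartition A, B
      (∀ S ⊆ A, τ * (A.card : ℝ) ≤ S.card → (S.card : ℝ) ≤ (1 - τ) * A.card →
        (S.card : ℝ) + ν * (Fintype.card V : ℝ) ≤
          ((B.filter fun v =>
            ν * (Fintype.card V : ℝ) ≤ ((G.neighborFinset v ∩ S).card : ℝ)).card : ℝ)) →
      -- f encodes a perfect matching M of G
      (∀ v : V, G.Adj v (f v)) → (∀ v : V, f (f v) = v) →
      -- conclusion: G* is a robust (ν,τ)-outexpander ...
      ((∀ S ⊆ B, τ * (n : ℝ) ≤ S.card → (S.card : ℝ) ≤ (1 - τ) * n →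
          (S.card : ℝ) + ν * n ≤
            ((B.filter fun x =>
              ν * (n : ℝ) ≤ ((S.filter fun v => x ≠ v ∧ G.Adj (f v) x).card : ℝ)).card : ℝ)) ∧
        -- ... with minimum semidegree at least ηn/2
        (∀ v ∈ B,
          η * (n : ℝ) / 2 ≤ ((B.filter fun x => x ≠ v ∧ G.Adj (f v) x).card : ℝ) ∧
          η * (n : ℝ) / 2 ≤ ((B.filter fun u => v ≠ u ∧ G.Adj (f u) v).card : ℝ))) := by
  intro η hη _
  refine ⟨1, one_pos, fun τ _ _ => ⟨1, one_pos, fun ν hν _ => ?_⟩⟩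
  refine ⟨max ⌈2 / η⌉₊ ⌈1 / ν⌉₊, fun n hn => ?_⟩
  intro V _ _ G _ A B f hdisj huniv hA hB hbip hdeg hexp hM hf
  have hinv : Function.Involutive f := hf
  have hηn : 2 ≤ η * n := le_mul_of_natCeil_div_le hη (le_of_max_le_left hn)
  have hνn : 1 ≤ ν * n := le_mul_of_natCeil_div_le hν (le_of_max_le_right hn)
  have hV : (Fintype.card V : ℝ) = 2 * n := by
    rw [← card_univ, ← huniv, card_union_of_disjoint hdisj, hA, hB]
    push_cast; ring
  have hfA : ∀ v ∈ B, f v ∈ A := fun v hv =>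
    SimpleGraph.neighborFinset_subset_left hbip hdisj hv (G.mem_neighborFinset _ _ |>.mpr (hM v))
  have hfB : ∀ v ∈ A, f v ∈ B := fun v hv =>
    SimpleGraph.neighborFinset_subset_right hbip hdisj hv (G.mem_neighborFinset _ _ |>.mpr (hM v))
  rw [hV, hA] at hexp
  refine ⟨fun S hSB hS₁ hS₂ => ?_, fun v hv => ⟨?_, ?_⟩⟩
  · have hSA : S.image f ⊆ A := image_subset_iff.mpr fun v hv => hfA v (hSB hv)
    rw [← card_image_of_injective S hinv.injective] at hS₁ hS₂
    exact SimpleGraph.card_add_le_card_robustOutNbhd hinv hνn (hexp _ hSA hS₁ hS₂)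
  · have := SimpleGraph.degree_le_card_outNbrs_add_one
      (SimpleGraph.neighborFinset_subset_right hbip hdisj (hfA v hv))
    linarith [hdeg (f v)]
  · have hN : G.neighborFinset v ⊆ B.image f := fun a ha =>
      mem_image.mpr ⟨f a, hfB a (SimpleGraph.neighborFinset_subset_left hbip hdisj hv ha), hf a⟩
    linarith [hdeg v, SimpleGraph.degree_le_card_inNbrs_add_one hinv hN]
end

section
/- Let n, D ∈ ℕ and 0 < 1/n ≪ γ' ≤ γ ≪ α < 1 with γ' ≤ γ^{7/6}. Let G be a D-regular graph on n vertices with D ≥ αn. Let Y, Z be disjoint subsets of V(G) with |Y| ≥ γn, ||Y|-|Z|| ≤ γn and e(Y, V(G)\Z) ≤ γ'n². Then e(Y, V(G)\Z) + e(Z, V(G)\Y) ≤ γ^{1/3}n², and moreover |Y|, |Z| ≥ γ^{1/6}n. -/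
/-! Double counting in the `D`-regular graph, with `e(Y, Z)` counted as ordered adjacent pairs
(`interedges`), which is within a factor `2` of `crossCount`. Counting the edges at `Y` gives
`D|Y| ≤ e(Y, Z) + 2 e(Y, V∖Z)`, and counting those at `Z` gives `e(Y, Z) + e(Z, V∖Y) ≤ D|Z|`.
As `e(Y, Z) ≤ |Y||Z|` and `e(Y, V∖Z) ≤ γ^{7/6} n² ≤ γ^{1/6} n |Y|`, the first inequality divided
by `|Y|` yields `|Y| ≥ (α - γ - 2γ^{1/6}) n`. Subtracting the two inequalities gives
`e(Z, V∖Y) ≤ D(|Z| - |Y|) + 2 e(Y, V∖Z) ≤ 3γn²`, so the sum is at most `4γn² ≤ γ^{1/3} n²`. -/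

open Finset

/-- The number of edges of `G` with one endpoint in `X` and the other endpoint in `W`. -/
def crossCount {V : Type*} [Fintype V] [DecidableEq V] (G : SimpleGraph V)
    [DecidableRel G.Adj] (X W : Finset V) : ℕ :=
  (G.edgeFinset.filter fun e => ∃ u v : V, e = s(u, v) ∧ u ∈ X ∧ v ∈ W).card

namespace SimpleGraph

variable {V : Type*} {G : SimpleGraph V} [DecidableRel G.Adj] {D : ℕ}

theorem card_interedges_comm (X W : Finset V) : #(G.interedges X W) = #(G.interedges W X) :=
  have := G.symm
  Rel.card_interedges_comm X W

variable [Fintype V]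

theorem IsRegularOfDegree.lt_card [Nonempty V] (hG : G.IsRegularOfDegree D) :
    D < Fintype.card V :=
  hG.degree_eq (Classical.arbitrary V) ▸ G.degree_lt_card_verts _

variable [DecidableEq V]

theorem card_interedges_univ (X : Finset V) : #(G.interedges X univ) = ∑ v ∈ X, G.degree v := by
  rw [interedges, Rel.interedges_eq_biUnion, card_biUnion]
  · simp [neighborFinset_eq_filter, degree]
  · intro a _ b _ hab
    simp only [Finset.disjoint_left, mem_map, Function.Embedding.coeFn_mk]
    rintro _ ⟨_, _, rfl⟩ ⟨_, _, h⟩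
    exact hab (Prod.ext_iff.1 h).1.symm

theorem IsRegularOfDegree.card_interedges_add_card_interedges_compl
    (hG : G.IsRegularOfDegree D) (X W : Finset V) :
    #(G.interedges X W) + #(G.interedges X Wᶜ) = D * #X := by
  have hunion : G.interedges X W ∪ G.interedges X Wᶜ = G.interedges X univ := by
    ext p
    simp only [mem_union, mem_interedges_iff, mem_compl, mem_univ, true_and]
    tauto
  rw [← card_union_of_disjoint (G.interedges_disjoint_right X disjoint_compl_right), hunion,
    card_interedges_univ, sum_congr rfl fun v _ => hG v, sum_const, smul_eq_mul, mul_comm]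

theorem crossCount_le_card_interedges (X W : Finset V) :
    crossCount G X W ≤ #(G.interedges X W) := by
  refine (card_le_card fun e he => ?_).trans (card_image_le (f := fun p => s(p.1, p.2)))
  obtain ⟨he, u, v, rfl, hu, hv⟩ := mem_filter.1 he
  exact mem_image.2 ⟨(u, v), G.mk_mem_interedges_iff.2 ⟨hu, hv, mem_edgeFinset.1 he⟩, rfl⟩

theorem card_interedges_le_two_mul_crossCount (X W : Finset V) :
    #(G.interedges X W) ≤ 2 * crossCount G X W := by
  refine card_le_mul_card_image_of_maps_to (f := fun p => s(p.1, p.2)) (fun p hp => ?_) 2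
    fun e _ => ?_
  · obtain ⟨hu, hv, huv⟩ := G.mem_interedges_iff.1 hp
    exact mem_filter.2 ⟨mem_edgeFinset.2 huv, p.1, p.2, rfl, hu, hv⟩
  · induction e using Sym2.ind with | _ u v => ?_
    refine (card_le_card fun p hp => ?_).trans (card_le_two (a := (u, v)) (b := (v, u)))
    rcases Sym2.eq_iff.1 (mem_filter.1 hp).2 with ⟨rfl, rfl⟩ | ⟨rfl, rfl⟩ <;> simp

theorem IsRegularOfDegree.mul_card_le_card_interedges_add (hG : G.IsRegularOfDegree D)
    (Y Z : Finset V) : D * #Y ≤ #(G.interedges Y Z) + 2 * crossCount G Y Zᶜ :=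
  hG.card_interedges_add_card_interedges_compl Y Z ▸
    Nat.add_le_add_left (card_interedges_le_two_mul_crossCount Y Zᶜ) _

theorem IsRegularOfDegree.card_interedges_add_crossCount_le (hG : G.IsRegularOfDegree D)
    (Y Z : Finset V) : #(G.interedges Y Z) + crossCount G Z Yᶜ ≤ D * #Z := by
  rw [← hG.card_interedges_add_card_interedges_compl Z Y, card_interedges_comm]
  exact Nat.add_le_add_left (crossCount_le_card_interedges Z Yᶜ) _

theorem IsRegularOfDegree.crossCount_add_crossCount_le [Nonempty V] (hG : G.IsRegularOfDegree D)
    {Y Z : Finset V} {ε : ℝ} (hε : 0 ≤ ε) (hYZ : (#Z : ℝ) - #Y ≤ ε * Fintype.card V)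
    (hY : (crossCount G Y Zᶜ : ℝ) ≤ ε * Fintype.card V ^ 2) :
    (crossCount G Y Zᶜ + crossCount G Z Yᶜ : ℝ) ≤ 4 * ε * Fintype.card V ^ 2 := by
  have hY' : (D * #Y : ℝ) ≤ #(G.interedges Y Z) + 2 * crossCount G Y Zᶜ :=
    mod_cast hG.mul_card_le_card_interedges_add Y Z
  have hZ : (#(G.interedges Y Z) + crossCount G Z Yᶜ : ℝ) ≤ D * #Z :=
    mod_cast hG.card_interedges_add_crossCount_le Y Z
  have hDn : (D : ℝ) ≤ Fintype.card V := mod_cast hG.lt_card.le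
  have hD : (D : ℝ) * (#Z - #Y) ≤ Fintype.card V * (ε * Fintype.card V) := by
    nlinarith [mul_nonneg (Nat.cast_nonneg D) (sub_nonneg.2 hYZ),
      mul_nonneg (sub_nonneg.2 hDn) (mul_nonneg hε (Nat.cast_nonneg (Fintype.card V)))]
  linarith

theorem IsRegularOfDegree.sub_mul_card_le_card (hG : G.IsRegularOfDegree D) {Y Z : Finset V}
    (hY : Y.Nonempty) {α γ δ : ℝ} (hD : α * Fintype.card V ≤ D)
    (hYZ : (#Z : ℝ) ≤ #Y + γ * Fintype.card V)
    (hc : (crossCount G Y Zᶜ : ℝ) ≤ δ * Fintype.card V * #Y) :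
    (α - γ - 2 * δ) * Fintype.card V ≤ #Y := by
  have hY0 : (0 : ℝ) < #Y := mod_cast hY.card_pos
  have hY' : (D * #Y : ℝ) ≤ #(G.interedges Y Z) + 2 * crossCount G Y Zᶜ :=
    mod_cast hG.mul_card_le_card_interedges_add Y Z
  have hYZ' : (#(G.interedges Y Z) : ℝ) ≤ #Y * #Z := mod_cast G.card_interedges_le_mul Y Z
  refine le_of_mul_le_mul_right ?_ hY0
  nlinarith

end SimpleGraph

theorem Real.four_mul_le_rpow_one_third {x : ℝ} (h₀ : 0 ≤ x) (h : x ≤ 1 / 8) :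
    4 * x ≤ x ^ ((1 : ℝ) / 3) := by
  set t := x ^ ((1 : ℝ) / 3)
  have ht : 0 ≤ t := Real.rpow_nonneg h₀ _
  have hx : t ^ 3 = x := by
    simp only [t, one_div]
    exact_mod_cast Real.rpow_inv_natCast_pow h₀ three_ne_zero
  rw [← hx] at h ⊢
  have ht2 : t ≤ 1 / 2 := by nlinarith [sq_nonneg (t - 1 / 2)]
  nlinarith [mul_nonneg ht ht]

/-- Let `0 < 1/n ≪ γ' ≤ γ ≪ α < 1` with `γ' ≤ γ^{7/6}`, let `G` be `D`-regular on
`n` vertices with `D ≥ αn`, and let `Y, Z` be disjoint with `|Y| ≥ γn`,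
`||Y|-|Z|| ≤ γn` and `e(Y, V(G)\Z) ≤ γ'n²`.  Then
`e(Y, V(G)\Z) + e(Z, V(G)\Y) ≤ γ^{1/3}n²` and `|Y|, |Z| ≥ γ^{1/6}n`. -/
theorem stmt14 :
    ∀ α : ℝ, 0 < α → α < 1 →
    ∃ γ₀ : ℝ, 0 < γ₀ ∧ ∀ γ : ℝ, 0 < γ → γ ≤ γ₀ →
    ∀ γ' : ℝ, 0 < γ' → γ' ≤ γ → γ' ≤ γ ^ ((7 : ℝ) / 6) →
    ∃ n₀ : ℕ, ∀ n : ℕ, n₀ ≤ n →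
    ∀ (V : Type) [Fintype V] [DecidableEq V] (G : SimpleGraph V) [DecidableRel G.Adj]
      (D : ℕ), Fintype.card V = n → G.IsRegularOfDegree D → α * (n : ℝ) ≤ D →
    ∀ Y Z : Finset V, Disjoint Y Z →
      γ * (n : ℝ) ≤ Y.card →
      |(Y.card : ℝ) - Z.card| ≤ γ * n →
      ((crossCount G Y Zᶜ : ℕ) : ℝ) ≤ γ' * (n : ℝ) ^ 2 →
      ((crossCount G Y Zᶜ + crossCount G Z Yᶜ : ℕ) : ℝ) ≤ γ ^ ((1 : ℝ) / 3) * (n : ℝ) ^ 2 ∧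
      γ ^ ((1 : ℝ) / 6) * (n : ℝ) ≤ Y.card ∧
      γ ^ ((1 : ℝ) / 6) * (n : ℝ) ≤ Z.card := by
  intro α hα₀ hα₁
  refine ⟨(α / 8) ^ 6, by positivity, fun γ hγ₀ hγα γ' _ hγ'γ hγ'γ₇ => ⟨1, ?_⟩⟩
  intro n hn V _ _ G _ D hcard hG hD Y Z _ hY hYZ hc
  obtain ⟨hZY, hYZ⟩ := abs_le.1 hYZ
  subst hcard
  have : Nonempty V := Fintype.card_pos_iff.1 hn
  set g := γ ^ ((1 : ℝ) / 6)
  have hgα : g ≤ α / 8 := by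
    simp only [g, one_div]
    rw [Real.rpow_inv_le_iff_of_pos hγ₀.le (by positivity) (by norm_num)]
    exact_mod_cast hγα
  have hγg : γ ≤ g :=
    Real.self_le_rpow_of_le_one hγ₀.le (hγα.trans (pow_le_one₀ (by positivity) (by linarith)))
      (by norm_num)
  have hc' : (crossCount G Y Zᶜ : ℝ) ≤ g * Fintype.card V * #Y := calc
    _ ≤ γ' * Fintype.card V ^ 2 := hc
    _ ≤ γ ^ ((7 : ℝ) / 6) * Fintype.card V ^ 2 := by gcongr
    _ = g * Fintype.card V * (γ * Fintype.card V) := by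
      rw [show (7 : ℝ) / 6 = 1 + 1 / 6 by norm_num, Real.rpow_add hγ₀, Real.rpow_one]; ring
    _ ≤ g * Fintype.card V * #Y := by gcongr
  have hYne : Y.Nonempty := card_pos.1 (mod_cast (by positivity : (0 : ℝ) < γ * _).trans_le hY)
  have hYbig := hG.sub_mul_card_le_card (γ := γ) hYne hD (by linarith) hc'
  refine ⟨?_, ?_, ?_⟩
  · push_cast
    calc _ ≤ 4 * γ * Fintype.card V ^ 2 :=
          hG.crossCount_add_crossCount_le hγ₀.le (by linarith) (hc.trans (by gcongr))
      _ ≤ _ := by gcongr; exact Real.four_mul_le_rpow_one_third hγ₀.le (by linarith)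
  · exact (mul_le_mul_of_nonneg_right (by linarith) (Nat.cast_nonneg _)).trans hYbig
  · have := mul_le_mul_of_nonneg_right (show g ≤ α - 2 * γ - 2 * g by linarith)
      (Nat.cast_nonneg (Fintype.card V))
    linarith
end

section
/- Suppose (d_i)_{1≤i≤n} is a non-decreasing sequence of positive integers with n·d₁ ≥ (d₁ + d_n)²/4. Then (d_i) is bipartite graphic: there exists a bipartite graph G with vertex classes A = {a₁,…,a_n} and B = {b₁,…,b_n} such that deg(a_i) = deg(b_i) = d_i for all i. -/
/-!
Let `D` be `d` listed in non-increasing order, with values in `[s, t]`. By the Gale–Ryser theorem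
it suffices that `∑_{j<k} D j ≤ ∑_{i<n} min (D i) k` for `k ≤ n`. Both sides contain
`∑_{j<k} min (D j) k`; beyond it the left side has at most `k (t - k)` and the right side at least
`(n - k) min s k`, and `k (t - k) ≤ (n - k) min s k` follows from `(s + t)² ≤ 4 n s` by AM–GM.

Gale–Ryser is proved by Ryser's interchange argument: start from the Ferrers matrix of the row
sums, whose column sums dominate `D`, and repeatedly move a one within a row from a column with a
surplus to a later column with a deficit.
-/
open Finset

theorem Nat.mul_sub_le_sub_mul_min {n s t k : ℕ} (hst : (s + t) ^ 2 ≤ 4 * (n * s)) (hk : k ≤ n) :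
    k * (t - k) ≤ (n - k) * min s k := by
  rcases le_or_gt t k with htk | hkt
  · simp [Nat.sub_eq_zero_of_le htk]
  obtain ⟨u, rfl⟩ : ∃ u, t = k + u := ⟨t - k, by omega⟩
  obtain ⟨v, rfl⟩ : ∃ v, n = k + v := ⟨n - k, by omega⟩
  simp only [Nat.add_sub_cancel_left]
  rcases le_total s k with hsk | hks
  · rw [min_eq_left hsk]
    nlinarith [sq_nonneg ((s : ℤ) + u - k)]
  · rw [min_eq_right hks, mul_comm v]
    rcases Nat.eq_zero_or_pos k with rfl | hk0
    · simp
    have huv : u ≤ v := by nlinarith [sq_nonneg ((s : ℤ) - k - u)]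
    exact Nat.mul_le_mul_left k huv

theorem sum_range_le_sum_range_min {n s t k : ℕ} {D : ℕ → ℕ} (hs : ∀ i < n, s ≤ D i)
    (ht : ∀ i < n, D i ≤ t) (hst : (s + t) ^ 2 ≤ 4 * (n * s)) (hk : k ≤ n) :
    ∑ j ∈ range k, D j ≤ ∑ i ∈ range n, min (D i) k := by
  calc ∑ j ∈ range k, D j = ∑ j ∈ range k, min (D j) k + ∑ j ∈ range k, (D j - k) := by
        rw [← sum_add_distrib]
        exact sum_congr rfl fun j _ => by omega
    _ ≤ ∑ j ∈ range k, min (D j) k + k * (t - k) := by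
        gcongr
        simpa using sum_le_card_nsmul (range k) (fun j => D j - k) (t - k) fun j hj => by
          have := ht j (by simp at hj; omega); omega
    _ ≤ ∑ j ∈ range k, min (D j) k + (n - k) * min s k :=
        Nat.add_le_add_left (Nat.mul_sub_le_sub_mul_min hst hk) _
    _ ≤ ∑ j ∈ range k, min (D j) k + ∑ j ∈ Ico k n, min (D j) k := by
        gcongr
        simpa using card_nsmul_le_sum (Ico k n) (fun j => min (D j) k) (min s k) fun j hj => by
          have := hs j (by simp at hj; omega); omega
    _ = ∑ i ∈ range n, min (D i) k := sum_range_add_sum_Ico _ hk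

/-- A `0`-`1` matrix with rows and columns indexed by `ℕ` is encoded by the finset of positions
of its ones. -/
def rowSum (E : Finset (ℕ × ℕ)) (i : ℕ) : ℕ := #{p ∈ E | p.1 = i}

def colSum (E : Finset (ℕ × ℕ)) (j : ℕ) : ℕ := #{p ∈ E | p.2 = j}

def colPrefix (E : Finset (ℕ × ℕ)) (k : ℕ) : ℕ := #{p ∈ E | p.2 < k}

theorem colPrefix_succ (E : Finset (ℕ × ℕ)) (j : ℕ) :
    colPrefix E (j + 1) = colPrefix E j + colSum E j := by
  rw [colPrefix, colPrefix, colSum, ← card_union_of_disjoint (disjoint_filter.2 fun _ _ h => h.ne),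
    ← filter_or]
  exact congr_arg card (filter_congr fun _ _ => by omega)

theorem colPrefix_of_subset {E : Finset (ℕ × ℕ)} {m n : ℕ} (hE : E ⊆ range m ×ˢ range n) :
    colPrefix E n = #E :=
  congr_arg card (filter_true_of_mem fun _ hp => (mem_product.1 (hE hp)).2 |> mem_range.1)

theorem exists_mem_notMem_of_colSum_lt {E : Finset (ℕ × ℕ)} {k l : ℕ}
    (h : colSum E l < colSum E k) : ∃ i, (i, k) ∈ E ∧ (i, l) ∉ E := by
  by_contra! hsub
  refine h.not_ge (card_le_card_of_injOn (fun p => (p.1, l)) (fun p hp => ?_)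
    fun p hp q hq hpq => ?_)
  · simp only [coe_filter, Set.mem_ofPred_eq] at hp ⊢
    exact ⟨hsub p.1 (by rw [← hp.2]; exact hp.1), trivial⟩
  · simp only [coe_filter, Set.mem_ofPred_eq, Prod.mk.injEq] at hp hq hpq
    exact Prod.ext hpq.1 (hp.2.trans hq.2.symm)

def moveInRow (E : Finset (ℕ × ℕ)) (i k l : ℕ) : Finset (ℕ × ℕ) :=
  insert (i, l) (E.erase (i, k))

section moveInRow

variable {E : Finset (ℕ × ℕ)} {i k l : ℕ}

theorem card_filter_moveInRow (P : ℕ × ℕ → Prop) [DecidablePred P] (hk : (i, k) ∈ E)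
    (hl : (i, l) ∉ E) :
    #{p ∈ moveInRow E i k l | P p} + (if P (i, k) then 1 else 0)
      = #{p ∈ E | P p} + (if P (i, l) then 1 else 0) := by
  have hl' : (i, l) ∉ {p ∈ E | P p}.erase (i, k) :=
    fun h => hl (mem_filter.1 (mem_of_mem_erase h)).1
  rw [moveInRow, filter_insert, filter_erase]
  split_ifs with hPl hPk hPk
  · rw [card_insert_of_notMem hl', card_erase_add_one (mem_filter.2 ⟨hk, hPk⟩)]
  · rw [card_insert_of_notMem hl', erase_eq_of_notMem fun h => hPk (mem_filter.1 h).2]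
  · rw [card_erase_add_one (mem_filter.2 ⟨hk, hPk⟩), add_zero]
  · rw [erase_eq_of_notMem fun h => hPk (mem_filter.1 h).2]

theorem card_moveInRow (hk : (i, k) ∈ E) (hl : (i, l) ∉ E) : #(moveInRow E i k l) = #E := by
  simpa using card_filter_moveInRow (fun _ => True) hk hl

theorem rowSum_moveInRow (hk : (i, k) ∈ E) (hl : (i, l) ∉ E) (a : ℕ) :
    rowSum (moveInRow E i k l) a = rowSum E a := by
  simpa [rowSum] using card_filter_moveInRow (fun p => p.1 = a) hk hl

theorem colPrefix_moveInRow (hk : (i, k) ∈ E) (hl : (i, l) ∉ E) (j : ℕ) :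
    colPrefix (moveInRow E i k l) j + (if k < j then 1 else 0)
      = colPrefix E j + (if l < j then 1 else 0) :=
  card_filter_moveInRow (fun p => p.2 < j) hk hl

theorem moveInRow_subset {m n : ℕ} (hE : E ⊆ range m ×ˢ range n) (hk : (i, k) ∈ E)
    (hl : l < n) :
    moveInRow E i k l ⊆ range m ×ˢ range n :=
  insert_subset (mem_product.2 ⟨(mem_product.1 (hE hk)).1, mem_range.2 hl⟩)
    ((erase_subset _ _).trans hE)

end moveInRow

theorem exists_window_of_le_of_ne {P B : ℕ → ℕ} {n : ℕ} (hle : ∀ m ≤ n, B m ≤ P m)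
    (h0 : P 0 = B 0) (hn : P n = B n) (hne : ∃ m ≤ n, P m ≠ B m) :
    ∃ k l, k < l ∧ l < n ∧ P k = B k ∧ P (l + 1) = B (l + 1) ∧
      ∀ m, k < m → m ≤ l → B m < P m := by
  classical
  have hfirst := Nat.find_spec hne
  set m₁ := Nat.find hne
  have hm₁ : 0 < m₁ := Nat.pos_of_ne_zero fun h => hfirst.2 (h ▸ h0)
  have hback : ∃ m, m₁ < m ∧ m ≤ n ∧ P m = B m :=
    ⟨n, lt_of_le_of_ne hfirst.1 fun h => hfirst.2 (h ▸ hn), le_rfl, hn⟩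
  have hsecond := Nat.find_spec hback
  set m₂ := Nat.find hback
  refine ⟨m₁ - 1, m₂ - 1, by omega, by omega, ?_, ?_, fun m hm hm' => ?_⟩
  · by_contra h
    exact Nat.find_min hne (by omega : m₁ - 1 < m₁) ⟨by omega, h⟩
  · rw [Nat.sub_add_cancel (by omega)]; exact hsecond.2.2
  · refine lt_of_le_of_ne (hle m (by omega)) fun h => ?_
    rcases (by omega : m = m₁ ∨ m₁ < m) with rfl | hlt
    · exact hfirst.2 h.symm
    · exact Nat.find_min hback (by omega : m < m₂) ⟨hlt, by omega, h.symm⟩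

section exchange

variable {m n : ℕ} {b : ℕ → ℕ} {E : Finset (ℕ × ℕ)}

theorem exists_movable_of_colPrefix_ne (hb : Antitone b) (hE : E ⊆ range m ×ˢ range n)
    (hdom : ∀ k ≤ n, ∑ j ∈ range k, b j ≤ colPrefix E k) (htot : #E = ∑ j ∈ range n, b j)
    (hne : ∃ k ≤ n, colPrefix E k ≠ ∑ j ∈ range k, b j) :
    ∃ i k l, (i, k) ∈ E ∧ (i, l) ∉ E ∧ k < l ∧ l < n ∧
      ∀ j, k < j → j ≤ l → ∑ j' ∈ range j, b j' < colPrefix E j := by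
  obtain ⟨k, l, hkl, hln, hk, hl, hwin⟩ := exists_window_of_le_of_ne hdom (by simp [colPrefix])
    ((colPrefix_of_subset hE).trans htot) hne
  have hbk : b k < colSum E k := by
    have := hwin (k + 1) (by omega) (by omega)
    rw [sum_range_succ, colPrefix_succ] at this
    omega
  have hbl : colSum E l < b l := by
    have := hwin l hkl le_rfl
    rw [sum_range_succ, colPrefix_succ] at hl
    omega
  obtain ⟨i, hik, hil⟩ := exists_mem_notMem_of_colSum_lt ((hbl.trans_le (hb hkl.le)).trans hbk)
  exact ⟨i, k, l, hik, hil, hkl, hln, hwin⟩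

theorem exists_colSum_eq_of_dominates (hb : Antitone b) (hE : E ⊆ range m ×ˢ range n)
    (hdom : ∀ k ≤ n, ∑ j ∈ range k, b j ≤ colPrefix E k) (htot : #E = ∑ j ∈ range n, b j) :
    ∃ F ⊆ range m ×ˢ range n, (∀ i, rowSum F i = rowSum E i) ∧ ∀ j < n, colSum F j = b j := by
  induction hΦ : ∑ k ∈ range (n + 1), colPrefix E k using Nat.strong_induction_on
    generalizing E with
  | _ Φ ih =>
    by_cases heq : ∀ k ≤ n, colPrefix E k = ∑ j ∈ range k, b j
    · refine ⟨E, hE, fun _ => rfl, fun j hj => ?_⟩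
      have := heq (j + 1) hj
      rw [colPrefix_succ, heq j hj.le, sum_range_succ] at this
      omega
    push Not at heq
    obtain ⟨i, k, l, hik, hil, hkl, hln, hwin⟩ := exists_movable_of_colPrefix_ne hb hE hdom htot heq
    have hmove := colPrefix_moveInRow hik hil
    have hle : ∀ j, colPrefix (moveInRow E i k l) j ≤ colPrefix E j := fun j => by
      have := hmove j; split_ifs at this <;> omega
    have hdom' : ∀ j ≤ n, ∑ j' ∈ range j, b j' ≤ colPrefix (moveInRow E i k l) j :=
      fun j hjn => by
        have hj := hmove j
        by_cases hwj : k < j ∧ j ≤ l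
        · rw [if_pos hwj.1, if_neg (by omega)] at hj
          have := hwin j hwj.1 hwj.2
          omega
        · have := hdom j hjn
          split_ifs at hj <;> omega
    have hlt : ∑ j ∈ range (n + 1), colPrefix (moveInRow E i k l) j < Φ := by
      refine hΦ ▸ sum_lt_sum (fun j _ => hle j) ⟨l, mem_range.2 (by omega), ?_⟩
      have := hmove l
      rw [if_pos hkl, if_neg (lt_irrefl l)] at this
      omega
    obtain ⟨F, hF, hrow, hcol⟩ := ih _ hlt (moveInRow_subset hE hik hln) hdom'
      ((card_moveInRow hik hil).trans htot) rfl
    exact ⟨F, hF, fun a => (hrow a).trans (rowSum_moveInRow hik hil a), hcol⟩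

end exchange

def ferrers (m n : ℕ) (a : ℕ → ℕ) : Finset (ℕ × ℕ) := {p ∈ range m ×ˢ range n | p.2 < a p.1}

section ferrers

variable {m n : ℕ} {a : ℕ → ℕ}

theorem ferrers_subset : ferrers m n a ⊆ range m ×ˢ range n := filter_subset _ _

theorem card_filter_ferrers_row {i k : ℕ} (hi : i < m) (hk : k ≤ n) :
    #{p ∈ ferrers m n a | p.2 < k ∧ p.1 = i} = min (a i) k := by
  have : {p ∈ ferrers m n a | p.2 < k ∧ p.1 = i} = {i} ×ˢ range (min (a i) k) := by
    ext ⟨x, y⟩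
    simp only [ferrers, mem_filter, mem_product, mem_range, mem_singleton]
    constructor
    · rintro ⟨⟨⟨-, -⟩, hy⟩, hyk, rfl⟩; omega
    · rintro ⟨rfl, hy⟩; omega
  simp [this]

theorem rowSum_ferrers {i : ℕ} (hi : i < m) (ha : a i ≤ n) : rowSum (ferrers m n a) i = a i := by
  rw [rowSum, ← min_eq_left ha, ← card_filter_ferrers_row hi le_rfl]
  exact congr_arg card (filter_congr fun p hp =>
    ⟨fun h => ⟨mem_range.1 (mem_product.1 (ferrers_subset hp)).2, h⟩, And.right⟩)

theorem colPrefix_ferrers {k : ℕ} (hk : k ≤ n) :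
    colPrefix (ferrers m n a) k = ∑ i ∈ range m, min (a i) k := by
  rw [colPrefix, card_eq_sum_card_fiberwise (f := Prod.fst) (t := range m)
    fun p hp => (mem_product.1 (ferrers_subset (mem_filter.1 hp).1)).1]
  refine sum_congr rfl fun i hi => ?_
  rw [filter_filter, card_filter_ferrers_row (mem_range.1 hi) hk]

end ferrers

/-- Sufficiency in the Gale–Ryser theorem. -/
theorem exists_rowSum_colSum_of_dominates {m n : ℕ} {a b : ℕ → ℕ} (hb : Antitone b)
    (hdom : ∀ k ≤ n, ∑ j ∈ range k, b j ≤ ∑ i ∈ range m, min (a i) k)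
    (htot : ∑ i ∈ range m, a i = ∑ j ∈ range n, b j) :
    ∃ E ⊆ range m ×ˢ range n, (∀ i < m, rowSum E i = a i) ∧ ∀ j < n, colSum E j = b j := by
  have ha : ∀ i < m, a i ≤ n := by
    have hmin : ∑ i ∈ range m, min (a i) n = ∑ i ∈ range m, a i :=
      le_antisymm (sum_le_sum fun i _ => min_le_left _ _) (htot.trans_le (hdom n le_rfl))
    intro i hi
    exact min_eq_left_iff.1 ((sum_eq_sum_iff_of_le fun i _ => min_le_left _ _).1 hmin i
      (mem_range.2 hi))
  obtain ⟨E, hE, hrow, hcol⟩ := exists_colSum_eq_of_dominates hb ferrers_subset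
    (fun k hk => colPrefix_ferrers hk ▸ hdom k hk)
    (by rw [← colPrefix_of_subset ferrers_subset, colPrefix_ferrers le_rfl, ← htot]
        exact sum_congr rfl fun i hi => min_eq_left (ha i (mem_range.1 hi)))
  exact ⟨E, hE, fun i hi => (hrow i).trans (rowSum_ferrers hi (ha i hi)), hcol⟩

namespace SimpleGraph

def bipartiteOfRel {α β : Type*} (r : α → β → Prop) : SimpleGraph (α ⊕ β) where
  Adj
    | .inl a, .inr b => r a b
    | .inr b, .inl a => r a b
    | _, _ => False
  symm := ⟨by rintro (a | b) (a' | b') h <;> exact h⟩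
  loopless := ⟨by rintro (a | b) h <;> exact h⟩

variable {α β : Type*} (r : α → β → Prop)

theorem ncard_neighborSet_bipartiteOfRel_inl (a : α) :
    ((bipartiteOfRel r).neighborSet (.inl a)).ncard = {b | r a b}.ncard := by
  have : (bipartiteOfRel r).neighborSet (.inl a) = .inr '' {b | r a b} := by
    ext (a' | b) <;> simp [bipartiteOfRel]
  rw [this, Set.ncard_image_of_injective _ Sum.inr_injective]

theorem ncard_neighborSet_bipartiteOfRel_inr (b : β) :
    ((bipartiteOfRel r).neighborSet (.inr b)).ncard = {a | r a b}.ncard := by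
  have : (bipartiteOfRel r).neighborSet (.inr b) = .inl '' {a | r a b} := by
    ext (a | b') <;> simp [bipartiteOfRel]
  rw [this, Set.ncard_image_of_injective _ Sum.inl_injective]

end SimpleGraph

section reverse

variable {m n : ℕ} {E : Finset (ℕ × ℕ)}

theorem ncard_setOf_rev_mem_eq_rowSum (hE : E ⊆ range m ×ˢ range n) (a : ℕ) :
    {j : Fin n | (a, (j.rev : ℕ)) ∈ E}.ncard = rowSum E a := by
  have hf : Function.Injective fun j : Fin n => (a, (j.rev : ℕ)) :=
    fun j j' h => Fin.rev_injective (Fin.ext (Prod.mk.inj h).2)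
  rw [rowSum, ← Set.ncard_coe_finset, ← Set.ncard_preimage_of_injective_subset_range hf]
  · congr 1; ext j; simp
  · rintro ⟨x, y⟩ hp
    simp only [coe_filter, Set.mem_ofPred_eq] at hp
    obtain ⟨hxy, rfl⟩ := hp
    exact ⟨Fin.rev ⟨y, mem_range.1 (mem_product.1 (hE hxy)).2⟩, by simp⟩

theorem ncard_setOf_rev_mem_eq_colSum (hE : E ⊆ range m ×ˢ range n) (b : ℕ) :
    {i : Fin m | ((i.rev : ℕ), b) ∈ E}.ncard = colSum E b := by
  have hf : Function.Injective fun i : Fin m => ((i.rev : ℕ), b) :=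
    fun i i' h => Fin.rev_injective (Fin.ext (Prod.mk.inj h).1)
  rw [colSum, ← Set.ncard_coe_finset, ← Set.ncard_preimage_of_injective_subset_range hf]
  · congr 1; ext i; simp
  · rintro ⟨x, y⟩ hp
    simp only [coe_filter, Set.mem_ofPred_eq] at hp
    obtain ⟨hxy, rfl⟩ := hp
    exact ⟨Fin.rev ⟨x, mem_range.1 (mem_product.1 (hE hxy)).1⟩, by simp⟩

end reverse

/-- If `(d_i)_{1 ≤ i ≤ n}` is a non-decreasing sequence of positive integers with
`n·d₁ ≥ (d₁ + d_n)²/4`, then it is bipartite graphic: there is a bipartite graph with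
vertex classes `A = Fin n` (left) and `B = Fin n` (right) in which the `i`-th vertex
of each class has degree `d_i`. -/
theorem stmt18 (n : ℕ) (hn : 0 < n) (d : Fin n → ℕ)
    (hmono : Monotone d)
    (hcond : (((d ⟨0, hn⟩ : ℝ) + d ⟨n - 1, by omega⟩) ^ 2) / 4
        ≤ (n : ℝ) * d ⟨0, hn⟩) :
    ∃ G : SimpleGraph (Fin n ⊕ Fin n),
      (∀ i j : Fin n, ¬ G.Adj (Sum.inl i) (Sum.inl j) ∧ ¬ G.Adj (Sum.inr i) (Sum.inr j)) ∧
      (∀ i : Fin n, (G.neighborSet (Sum.inl i)).ncard = d i ∧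
        (G.neighborSet (Sum.inr i)).ncard = d i) := by
  let D : ℕ → ℕ := fun k => d ⟨n - 1 - k, by omega⟩
  have hD : Antitone D := fun k l hkl => hmono (Fin.mk_le_mk.2 (by omega))
  have hsq : (d ⟨0, hn⟩ + d ⟨n - 1, by omega⟩) ^ 2 ≤ 4 * (n * d ⟨0, hn⟩) := by
    rw [div_le_iff₀ four_pos, mul_comm] at hcond
    exact_mod_cast hcond
  obtain ⟨E, hE, hrow, hcol⟩ := exists_rowSum_colSum_of_dominates hD
    (fun k hk => sum_range_le_sum_range_min (fun i _ => hmono (Fin.mk_le_mk.2 (by omega)))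
      (fun i _ => hmono (Fin.mk_le_mk.2 (by omega))) hsq hk) rfl
  have hDrev : ∀ i : Fin n, D i.rev = d i := fun i => congr_arg d (Fin.ext (by simp; omega))
  refine ⟨SimpleGraph.bipartiteOfRel fun i j : Fin n => ((i.rev : ℕ), (j.rev : ℕ)) ∈ E,
    fun _ _ => ⟨id, id⟩, fun i => ⟨?_, ?_⟩⟩
  · rw [SimpleGraph.ncard_neighborSet_bipartiteOfRel_inl, ncard_setOf_rev_mem_eq_rowSum hE,
      hrow _ i.rev.isLt, hDrev]
  · rw [SimpleGraph.ncard_neighborSet_bipartiteOfRel_inr, ncard_setOf_rev_mem_eq_colSum hE,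
      hcol _ i.rev.isLt, hDrev]
end
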